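/- arXiv:1302.4042 — 6 statements merged into one kernel-verified Lean document; each statement's English description precedes it below -/
import Mathlib

section
/- Let R be a ring satisfying: for any x₁,…,x₅ ∈ R there exists x ∈ R with x − xᵢ a unit for all i. Then for any x ∈ R there exists y ∈ R such that 1 + y, 1 − y, 1 + (x + y), and 1 − (x + y) are all units of R. -/
theorem isUnit_one_add_and_one_sub_iff {R : Type*} [Ring R] (a : R) :
    IsUnit (1 + a) ∧ IsUnit (1 - a) ↔ IsUnit (a - -1) ∧ IsUnit (a - 1) := by
  rw [sub_neg_eq_add, add_comm, ← neg_sub, IsUnit.neg_iff]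

/-- If `R` satisfies the five-element avoidance condition, then for any `x ∈ R`
there exists `y ∈ R` such that `1+y`, `1-y`, `1+(x+y)` and `1-(x+y)` are units. -/
theorem exists_good_translate (R : Type*) [Ring R]
    (h : ∀ x₁ x₂ x₃ x₄ x₅ : R, ∃ x : R, IsUnit (x - x₁) ∧ IsUnit (x - x₂) ∧
      IsUnit (x - x₃) ∧ IsUnit (x - x₄) ∧ IsUnit (x - x₅)) :
    ∀ x : R, ∃ y : R, IsUnit (1 + y) ∧ IsUnit (1 - y) ∧
      IsUnit (1 + (x + y)) ∧ IsUnit (1 - (x + y)) := by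
  intro x
  obtain ⟨y, hy₁, hy₂, hy₃, hy₄, -⟩ := h (-1) 1 (-1 - x) (1 - x) 0
  obtain ⟨hy, hy'⟩ := (isUnit_one_add_and_one_sub_iff y).2 ⟨hy₁, hy₂⟩
  obtain ⟨hxy, hxy'⟩ := (isUnit_one_add_and_one_sub_iff (x + y)).2
    ⟨by rwa [add_comm, ← sub_sub_eq_add_sub], by rwa [add_comm, ← sub_sub_eq_add_sub]⟩
  exact ⟨y, hy, hy', hxy, hxy'⟩
end

section
/- Let α : R → R′ be a unital ring antihomomorphism and α∗∗ : GL₂(R) → GL₂(R′) the map X ↦ E(0)⁻¹·((X⁻¹)ᵀ)^α·E(0). Then E(t)^{α∗∗} = E(t^α) for every t ∈ R. -/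
/-- For a unital ring antihomomorphism `α : R → R'`, the map
`α∗∗ : X ↦ E(0)⁻¹ · ((X⁻¹)ᵀ)^α · E(0)` sends `E(t)` to `E(t^α)` for every `t ∈ R`. -/
theorem antihom_glTwo_hom_on_E (R R' : Type*) [Ring R] [Ring R'] (α : R → R')
    (hadd : ∀ x y : R, α (x + y) = α x + α y) (hone : α 1 = 1)
    (hanti : ∀ x y : R, α (x * y) = α y * α x)
    (t : R) (u : (Matrix (Fin 2) (Fin 2) R)ˣ)
    (hu : u.val = !![t, 1; -1, 0]) :
    (!![0, -1; 1, 0] : Matrix (Fin 2) (Fin 2) R') *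
        ((u⁻¹).val.transpose).map α * !![0, 1; -1, 0] =
      !![α t, 1; -1, 0] := by
  have h0 : α 0 = 0 := by
    have := hadd 0 0
    simp only [add_zero] at this
    exact left_eq_add.mp this
  have hneg : ∀ x : R, α (-x) = -(α x) := by
    intro x
    have := hadd x (-x)
    rw [add_neg_cancel, h0] at this
    exact (neg_eq_of_add_eq_zero_right this.symm).symm
  -- identify u⁻¹
  have hv : (u⁻¹).val = !![0, -1; 1, t] := by
    have h1 : (!![0, -1; 1, t] : Matrix (Fin 2) (Fin 2) R) * u.val = 1 := by
      rw [hu]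
      ext i j
      fin_cases i <;> fin_cases j <;>
        simp [Matrix.mul_apply, Fin.sum_univ_two]
    have h2 : u.val * (u⁻¹).val = 1 := u.mul_inv
    exact (left_inv_eq_right_inv h1 h2).symm
  have htr : (!![0, -1; 1, t] : Matrix (Fin 2) (Fin 2) R).transpose = !![0, 1; -1, t] := by
    ext i j; fin_cases i <;> fin_cases j <;> simp
  have hmap : ((!![0, 1; -1, t] : Matrix (Fin 2) (Fin 2) R)).map α
      = !![(0 : R'), 1; -1, α t] := by
    ext i j
    fin_cases i <;> fin_cases j <;>
      simp [Matrix.map_apply, h0, hone, hneg]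
  rw [hv, htr, hmap]
  ext i j
  fin_cases i <;> fin_cases j <;>
    simp [Matrix.mul_apply, Fin.sum_univ_two]
end

section
/- Let α : R → R′ be a map that is simultaneously a unital ring homomorphism and antihomomorphism. Then the image α(R) is a commutative subring of R′, and for every X ∈ GL₂(R) one has (det X^{α∗}) · X^{α∗∗} = X^{α∗}, where α∗ is the entrywise map and α∗∗(X) = E(0)⁻¹·((X⁻¹)ᵀ)^α·E(0). -/
/-!
Since `α` is both multiplicative and antimultiplicative, `α x * α y = α (x * y) = α y * α x`, so
`α` factors through the commutative subring generated by its image. Over a commutative ring,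
conjugating the transpose of a `2 × 2` matrix `N` by `E(0)` gives the adjugate of `N`, and
`det M • adj (M⁻¹) = M` for invertible `M`; pushing this identity forward to `R'` is the claim.
-/

open Matrix

theorem Matrix.adjugate_fin_two_eq_conj_transpose {S : Type*} [CommRing S]
    (N : Matrix (Fin 2) (Fin 2) S) :
    N.adjugate = !![0, -1; 1, 0] * Nᵀ * !![0, 1; -1, 0] := by
  ext i j
  fin_cases i <;> fin_cases j <;>
    simp [adjugate_fin_two, mul_apply, vecMul, dotProduct, Fin.sum_univ_two]

theorem Matrix.det_smul_adjugate_nonsing_inv {S n : Type*} [CommRing S] [Fintype n]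
    [DecidableEq n] {M : Matrix n n S} (h : IsUnit M.det) : M.det • M⁻¹.adjugate = M :=
  calc M.det • M⁻¹.adjugate = M.det • (M * (M⁻¹ * M⁻¹.adjugate)) := by
        rw [← Matrix.mul_assoc, mul_nonsing_inv M h, Matrix.one_mul]
    _ = (M.det * M⁻¹.det) • M := by rw [mul_adjugate, Matrix.mul_smul, Matrix.mul_one, smul_smul]
    _ = M := by rw [← det_mul, mul_nonsing_inv M h, det_one, one_smul]

theorem RingHom.map_det_smul_conj_transpose_nonsing_inv {S T : Type*} [CommRing S] [Ring T]
    (ι : S →+* T) {M : Matrix (Fin 2) (Fin 2) S} (h : IsUnit M.det) :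
    ι M.det • (!![0, -1; 1, 0] * M⁻¹ᵀ.map ι * !![0, 1; -1, 0]) = M.map ι :=
  calc ι M.det • (!![0, -1; 1, 0] * M⁻¹ᵀ.map ι * !![0, 1; -1, 0])
      = (M.det • M⁻¹.adjugate).map ι := by
        rw [adjugate_fin_two_eq_conj_transpose]
        ext i j
        fin_cases i <;> fin_cases j <;> simp [mul_apply, vecMul, dotProduct, Fin.sum_univ_two]
    _ = M.map ι := by rw [det_smul_adjugate_nonsing_inv h]

open scoped IsMulCommutative in
theorem RingHom.det_smul_conj_transpose_map_inv {R R' : Type*} [Ring R] [Ring R'] (f : R →+* R')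
    (hf : ∀ a ∈ Set.range f, ∀ b ∈ Set.range f, a * b = b * a)
    (X : (Matrix (Fin 2) (Fin 2) R)ˣ) :
    let A : Matrix (Fin 2) (Fin 2) R' := X.val.map f
    (A 0 0 * A 1 1 - A 0 1 * A 1 0) •
      (!![0, -1; 1, 0] * (X⁻¹).val.transpose.map f * !![0, 1; -1, 0]) = A := by
  have := Subring.isMulCommutative_closure hf
  let g : R →+* Subring.closure (Set.range f) :=
    f.codRestrict _ fun x => Subring.subset_closure ⟨x, rfl⟩
  let M := Units.map g.mapMatrix.toMonoidHom X
  have key := (Subring.closure (Set.range f)).subtype.map_det_smul_conj_transpose_nonsing_inv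
    (isUnits_det_units M)
  rw [← coe_units_inv, det_fin_two] at key
  exact key

/-- If `α : R → R'` is simultaneously a unital ring homomorphism and an
antihomomorphism, then the image `α(R)` is commutative, and for every
`X ∈ GL₂(R)` one has `(det X^{α∗}) · X^{α∗∗} = X^{α∗}`. -/
theorem hom_and_antihom_det_relation (R R' : Type*) [Ring R] [Ring R'] (α : R → R')
    (hadd : ∀ x y : R, α (x + y) = α x + α y) (hone : α 1 = 1)
    (hhom : ∀ x y : R, α (x * y) = α x * α y)
    (hanti : ∀ x y : R, α (x * y) = α y * α x) :
    (∀ a ∈ Set.range α, ∀ b ∈ Set.range α, a * b = b * a) ∧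
      ∀ X : (Matrix (Fin 2) (Fin 2) R)ˣ,
        let A : Matrix (Fin 2) (Fin 2) R' := (X.val).map α
        (A 0 0 * A 1 1 - A 0 1 * A 1 0) •
            (!![0, -1; 1, 0] *
              ((X⁻¹).val.transpose).map α * !![0, 1; -1, 0]) = A := by
  let f : R →+* R' := .mk' ⟨⟨α, hone⟩, hhom⟩ hadd
  have hcomm : ∀ a ∈ Set.range α, ∀ b ∈ Set.range α, a * b = b * a := by
    rintro _ ⟨x, rfl⟩ _ ⟨y, rfl⟩
    rw [← hhom, hanti]
  exact ⟨hcomm, f.det_smul_conj_transpose_map_inv hcomm⟩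
end

section
/- Let R be a ring, M a free left R-module of rank 2, and (p₀,p₁,p₂,p₃) a harmonic quadruple in P(M). Then p₂ and p₃ are distant if and only if 2 is a unit in R; and p₂ ≠ p₃ if and only if −1 ≠ 1 in R. -/
/-- Harmonic quadruple of points of the projective line over `M`. -/
def Harm (R M : Type*) [Ring R] [AddCommGroup M] [Module R M]
    (p₀ p₁ p₂ p₃ : Submodule R M) : Prop :=
  ∃ g : Module.Basis (Fin 2) R M,
    p₀ = Submodule.span R {g 0} ∧ p₁ = Submodule.span R {g 1} ∧
    p₂ = Submodule.span R {g 0 + g 1} ∧ p₃ = Submodule.span R {g 0 - g 1}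

/-! Work in coordinates for the basis `(g₀, g₁)`: `a • (g₀ + g₁) + b • (g₀ - g₁)` has coordinates
`(a + b, a - b)`. Then `g₀ ∈ p₂ ⊔ p₃` forces `a = b` with `a + a = 1`, so `2` is a unit, and
conversely `½` solves every such system; a common point `a • (g₀ + g₁) = b • (g₀ - g₁)` has
`a = b = -b`, so `2 * a = 0`; and `g₀ + g₁ ∈ R ∙ (g₀ - g₁)` forces `1 = a = -1`. -/

open Submodule

section

variable {R M : Type*} [Ring R] [AddCommGroup M] [Module R M]

theorem span_pair_le_span_add_sup_span_sub (h2 : IsUnit (2 : R)) (x y : M) :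
    span R {x, y} ≤ span R {x + y} ⊔ span R {x - y} := by
  obtain ⟨u, hu⟩ := h2
  have halve (z : M) : (↑u⁻¹ : R) • (2 : R) • z = z := by
    rw [smul_smul, ← hu, u.inv_mul, one_smul]
  have hp : x + y ∈ span R {x + y} ⊔ span R {x - y} := mem_sup_left (mem_span_singleton_self _)
  have hm : x - y ∈ span R {x + y} ⊔ span R {x - y} := mem_sup_right (mem_span_singleton_self _)
  have hx := smul_mem _ (↑u⁻¹ : R) (add_mem hp hm)
  have hy := smul_mem _ (↑u⁻¹ : R) (sub_mem hp hm)
  rw [show x + y + (x - y) = (2 : R) • x by rw [two_smul]; abel, halve] at hx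
  rw [show x + y - (x - y) = (2 : R) • y by rw [two_smul]; abel, halve] at hy
  rw [span_le, Set.insert_subset_iff, Set.singleton_subset_iff]
  exact ⟨hx, hy⟩

variable {x y : M} (hxy : LinearIndependent R ![x, y])
include hxy

theorem LinearIndependent.isUnit_two_of_mem_span_add_sup_span_sub
    (hx : x ∈ span R {x + y} ⊔ span R {x - y}) : IsUnit (2 : R) := by
  obtain ⟨_, ⟨a, rfl⟩, _, ⟨b, rfl⟩, hab⟩ := by simpa only [mem_sup, mem_span_singleton] using hx
  have hcoord : (a + b) • x + (a - b) • y = (1 : R) • x + (0 : R) • y :=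
    calc (a + b) • x + (a - b) • y = a • (x + y) + b • (x - y) := by
          simp only [add_smul, sub_smul, smul_add, smul_sub]; abel
      _ = (1 : R) • x + (0 : R) • y := by rw [hab, one_smul, zero_smul, add_zero]
  obtain ⟨hsum, hdiff⟩ := hxy.eq_of_pair hcoord
  rw [sub_eq_zero.1 hdiff] at hsum
  exact ⟨⟨2, b, by rw [two_mul, hsum], by rw [mul_two, hsum]⟩, rfl⟩

theorem LinearIndependent.disjoint_span_add_span_sub (h2 : IsUnit (2 : R)) :
    Disjoint (span R {x + y}) (span R {x - y}) := by
  rw [disjoint_def]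
  intro _ hz hz'
  obtain ⟨a, rfl⟩ := mem_span_singleton.1 hz
  obtain ⟨b, hba⟩ := mem_span_singleton.1 hz'
  have hcoord : (b - a) • x + (-b - a) • y = (0 : R) • x + (0 : R) • y :=
    calc (b - a) • x + (-b - a) • y = b • (x - y) - a • (x + y) := by
          simp only [sub_smul, neg_smul, smul_add, smul_sub]; abel
      _ = (0 : R) • x + (0 : R) • y := by rw [hba, sub_self, zero_smul, zero_smul, add_zero]
  obtain ⟨hx_coord, hy_coord⟩ := hxy.eq_of_pair hcoord
  rw [sub_eq_zero.1 hx_coord, sub_eq_zero, neg_eq_iff_add_eq_zero, ← two_mul] at hy_coord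
  rw [h2.mul_right_eq_zero.1 hy_coord, zero_smul]

theorem LinearIndependent.isCompl_span_add_span_sub_iff (hspan : span R {x, y} = ⊤) :
    IsCompl (span R {x + y}) (span R {x - y}) ↔ IsUnit (2 : R) := by
  refine ⟨fun hc => hxy.isUnit_two_of_mem_span_add_sup_span_sub ?_, fun h2 => ?_⟩
  · rw [hc.sup_eq_top]; exact mem_top
  · exact ⟨hxy.disjoint_span_add_span_sub h2, codisjoint_iff.2 <| top_le_iff.1 <|
      hspan ▸ span_pair_le_span_add_sup_span_sub h2 x y⟩

theorem LinearIndependent.span_add_eq_span_sub_iff :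
    span R {x + y} = span R {x - y} ↔ (-1 : R) = 1 := by
  refine ⟨fun heq => ?_, fun h => ?_⟩
  · obtain ⟨a, ha⟩ := mem_span_singleton.1 (heq ▸ mem_span_singleton_self (x + y))
    have hcoord : a • x + (-a) • y = (1 : R) • x + (1 : R) • y := by
      rw [neg_smul, ← sub_eq_add_neg, ← smul_sub, ha, one_smul, one_smul]
    obtain ⟨rfl, h⟩ := hxy.eq_of_pair hcoord
    exact h
  · rw [sub_eq_add_neg, ← neg_one_smul R y, h, one_smul]

end

/-- For a harmonic quadruple `(p₀,p₁,p₂,p₃)`: the points `p₂`, `p₃` are distant iff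
`2` is a unit in `R`, and `p₂ ≠ p₃` iff `-1 ≠ 1` in `R`. -/
theorem harm_last_two (R M : Type*) [Ring R] [AddCommGroup M] [Module R M]
    (p₀ p₁ p₂ p₃ : Submodule R M) (h : Harm R M p₀ p₁ p₂ p₃) :
    (IsCompl p₂ p₃ ↔ IsUnit (2 : R)) ∧ (p₂ ≠ p₃ ↔ (-1 : R) ≠ 1) := by
  obtain ⟨g, -, -, rfl, rfl⟩ := h
  have hg_vec : ![g 0, g 1] = ⇑g := by ext i; fin_cases i <;> rfl
  have hg : LinearIndependent R ![g 0, g 1] := hg_vec ▸ g.linearIndependent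
  have hspan : span R {g 0, g 1} = ⊤ := by
    rw [← g.span_eq, ← hg_vec, Matrix.range_cons_cons_empty]
    rfl
  exact ⟨hg.isCompl_span_add_span_sub_iff hspan, hg.span_add_eq_span_sub_iff.not⟩
end

section
/- Let R satisfy: for any x₁,…,x₅ ∈ R there is x with all x − xᵢ units; let 2 ∈ R*, and let μ : P(M) → P(M′) be a harmonicity preserver. Then 2 is a unit in R′. -/
open Submodule

namespace Module.Basis

variable {R M : Type*} [Ring R] [AddCommGroup M] [Module R M] (b : Basis (Fin 2) R M)

theorem span_pair_eq_top : span R {b 0, b 1} = ⊤ := by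
  rw [← b.span_eq]
  congr
  ext
  simp [Fin.exists_fin_two, eq_comm]

theorem isUnit_two_of_mem_span_add_sub (h : b 0 ∈ span R {b 0 + b 1, b 0 - b 1}) :
    IsUnit (2 : R) := by
  obtain ⟨s, t, hst⟩ := mem_span_pair.mp h
  have hsum : s + t = 1 := by simpa using congr($(congrArg b.repr hst) 0)
  have hdiff : s = t := by simpa [add_neg_eq_zero] using congr($(congrArg b.repr hst) 1)
  subst hdiff
  exact isUnit_iff_exists.mpr ⟨s, by rw [two_mul, hsum], by rw [mul_two, hsum]⟩

theorem linearIndependent_add_sub (h2 : IsUnit (2 : R)) :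
    LinearIndependent R ![b 0 + b 1, b 0 - b 1] := by
  refine LinearIndependent.pair_iff.mpr fun s t hst => ?_
  have hsum : s + t = 0 := by simpa using congr($(congrArg b.repr hst) 0)
  have hdiff : s = t := by simpa [add_neg_eq_zero] using congr($(congrArg b.repr hst) 1)
  subst hdiff
  rw [← two_mul, h2.mul_right_eq_zero] at hsum
  exact ⟨hsum, hsum⟩

theorem span_add_sub_eq_top (h2 : IsUnit (2 : R)) :
    span R {b 0 + b 1, b 0 - b 1} = ⊤ := by
  set v : R := ↑h2.unit⁻¹
  have hv : v * 2 = 1 := h2.val_inv_mul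
  rw [eq_top_iff, ← b.span_pair_eq_top, span_le, Set.insert_subset_iff,
    Set.singleton_subset_iff]
  constructor
  · refine mem_span_pair.mpr ⟨v, v, ?_⟩
    rw [← smul_add, add_add_sub_cancel, ← two_smul R, smul_smul, hv, one_smul]
  · refine mem_span_pair.mpr ⟨v, -v, ?_⟩
    rw [neg_smul, ← sub_eq_add_neg, ← smul_sub, add_sub_sub_cancel, ← two_smul R, smul_smul, hv,
      one_smul]

noncomputable def addSub (h2 : IsUnit (2 : R)) : Basis (Fin 2) R M :=
  .mk (b.linearIndependent_add_sub h2)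
    (by rw [Matrix.range_cons_cons_empty, b.span_add_sub_eq_top h2])

@[simp]
theorem addSub_zero (h2 : IsUnit (2 : R)) : b.addSub h2 0 = b 0 + b 1 := by
  simp [addSub]

@[simp]
theorem addSub_one (h2 : IsUnit (2 : R)) : b.addSub h2 1 = b 0 - b 1 := by
  simp [addSub]

end Module.Basis

namespace Harm

variable {R M : Type*} [Ring R] [AddCommGroup M] [Module R M]

theorem of_basis (b : Module.Basis (Fin 2) R M) :
    Harm R M (span R {b 0}) (span R {b 1}) (span R {b 0 + b 1}) (span R {b 0 - b 1}) :=
  ⟨b, rfl, rfl, rfl, rfl⟩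

theorem of_basis_add_sub (b : Module.Basis (Fin 2) R M) (h2 : IsUnit (2 : R)) :
    Harm R M (span R {b 0 + b 1}) (span R {b 0 - b 1}) (span R {b 0}) (span R {b 1}) := by
  refine ⟨b.addSub h2, by simp, by simp, ?_, ?_⟩
  · rw [b.addSub_zero, b.addSub_one, add_add_sub_cancel, ← two_smul R,
      span_singleton_smul_eq h2]
  · rw [b.addSub_zero, b.addSub_one, add_sub_sub_cancel, ← two_smul R,
      span_singleton_smul_eq h2]

variable {p₀ p₁ p₂ p₃ : Submodule R M}

theorem sup_eq_top (h : Harm R M p₀ p₁ p₂ p₃) : p₀ ⊔ p₁ = ⊤ := by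
  obtain ⟨b, rfl, rfl, -, -⟩ := h
  rw [← span_insert, b.span_pair_eq_top]

theorem isUnit_two_of_sup_eq_top (h : Harm R M p₀ p₁ p₂ p₃) (htop : p₂ ⊔ p₃ = ⊤) :
    IsUnit (2 : R) := by
  obtain ⟨b, -, -, rfl, rfl⟩ := h
  refine b.isUnit_two_of_mem_span_add_sub ?_
  rw [span_insert, htop]
  exact mem_top

end Harm

theorem two_isUnit_in_codomain_general
    (R M R' M' : Type*) [Ring R] [AddCommGroup M] [Module R M]
    [Ring R'] [AddCommGroup M'] [Module R' M']
    (h2 : IsUnit (2 : R)) (e : Module.Basis (Fin 2) R M)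
    (μ : Submodule R M → Submodule R' M')
    (hμ : ∀ p₀ p₁ p₂ p₃ : Submodule R M,
      Harm R M p₀ p₁ p₂ p₃ → Harm R' M' (μ p₀) (μ p₁) (μ p₂) (μ p₃)) :
    IsUnit (2 : R') :=
  (hμ _ _ _ _ (Harm.of_basis e)).isUnit_two_of_sup_eq_top
    (hμ _ _ _ _ (Harm.of_basis_add_sub e h2)).sup_eq_top

/-- Lemma 1: if `R` satisfies the five-element avoidance condition, `2 ∈ R*`,
and `μ` is a harmonicity preserver between the projective lines over the rank-2
free modules `M` and `M'`, then `2` is a unit in `R'`. -/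
theorem two_isUnit_in_codomain
    (R M R' M' : Type*) [Ring R] [AddCommGroup M] [Module R M]
    [Ring R'] [AddCommGroup M'] [Module R' M']
    (hfive : ∀ x₁ x₂ x₃ x₄ x₅ : R, ∃ x : R, IsUnit (x - x₁) ∧ IsUnit (x - x₂) ∧
      IsUnit (x - x₃) ∧ IsUnit (x - x₄) ∧ IsUnit (x - x₅))
    (h2 : IsUnit (2 : R)) (e : Module.Basis (Fin 2) R M)
    (μ : Submodule R M → Submodule R' M')
    (hμ : ∀ p₀ p₁ p₂ p₃ : Submodule R M,
      Harm R M p₀ p₁ p₂ p₃ → Harm R' M' (μ p₀) (μ p₁) (μ p₂) (μ p₃)) :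
    IsUnit (2 : R') :=
  two_isUnit_in_codomain_general R M R' M' h2 e μ hμ
end

section
/- Let R satisfy the five-element avoidance condition and 2 ∈ R*, let μ : P(M) → P(M′) be a harmonicity preserver, and let (e₀,e₁), (e₀′,e₁′) be bases of M, M′ with μ(Re₀)=R′e₀′, μ(Re₁)=R′e₁′, μ(R(e₀±e₁))=R′(e₀′±e₁′). Then there is a unique map β : R → R′ with μ(R(x e₀ + e₁)) = R′(x^β e₀′ + e₁′) for all x ∈ R; this β is additive, satisfies 1^β = 1, and ((x+y)/2)^β = (x^β + y^β)/2 whenever x − y ∈ R*. -/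
/-!
With `∞ = R e₀` and `p(x) = R (x e₀ + e₁)`, the harmonic quadruples starting with `(∞, p(y))`
are exactly the quadruples `(∞, p(y), p(y + c), p(y - c))` with `c` a unit. Since `μ` fixes `∞`,
walking from `p(0)` in two unit steps shows that `μ` maps every `p(x)` to some `p(β x)`, and
then `β (y + c) + β (y - c) = 2 β y` for every unit `c`. For such a `β` the composite of the
reflections in `a` and `a + h` is the translation by `2h`; choosing `a` by the avoidance
condition so that every difference involved is a unit gives `β (x + y) - β x = β y - β 0`.
-/

open Module Submodule

section
variable {A N : Type*} [Ring A] [AddCommGroup N] [Module A N]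

theorem smul_left_injective_of_apply_eq_one (φ : N →ₗ[A] A) {v : N} (hv : φ v = 1) :
    Function.Injective (· • v : A → N) :=
  fun r s h => by simpa [hv] using congrArg φ h

theorem exists_unit_smul_of_span_singleton_eq {u v : N}
    (hu : Function.Injective (· • u : A → N)) (hv : Function.Injective (· • v : A → N))
    (h : span A {u} = span A {v}) : ∃ s : Aˣ, u = s • v := by
  obtain ⟨s, rfl⟩ := mem_span_singleton.mp (h ▸ mem_span_singleton_self u)
  obtain ⟨s', hs'⟩ := mem_span_singleton.mp (h.symm ▸ mem_span_singleton_self v)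
  have h₁ : s' * s = 1 := hv (by simp only [mul_smul, hs', one_smul])
  have h₂ : s * s' = 1 := hu (by simp only [mul_smul, hs', one_smul])
  exact ⟨⟨s, s', h₂, h₁⟩, rfl⟩

end

namespace Module.Basis
variable {A N : Type*} [Ring A] [AddCommGroup N] [Module A N] (f : Basis (Fin 2) A N)

def affinePoint (x : A) : Submodule A N := span A {x • f 0 + f 1}

theorem affinePoint_zero : f.affinePoint 0 = span A {f 1} := by
  simp [affinePoint]

theorem affinePoint_one : f.affinePoint 1 = span A {f 0 + f 1} := by
  simp [affinePoint]

theorem coord_zero_smul_add (x : A) : f.coord 0 (x • f 0 + f 1) = x := by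
  simp

theorem coord_one_smul_add (x : A) : f.coord 1 (x • f 0 + f 1) = 1 := by
  simp

theorem smul_left_injective_smul_add (x : A) :
    Function.Injective (· • (x • f 0 + f 1) : A → N) :=
  smul_left_injective_of_apply_eq_one _ (f.coord_one_smul_add x)

theorem affinePoint_injective : Function.Injective f.affinePoint := by
  intro a b h
  obtain ⟨s, hs⟩ := exists_unit_smul_of_span_singleton_eq
    (f.smul_left_injective_smul_add a) (f.smul_left_injective_smul_add b) h
  rw [Units.smul_def] at hs
  have hs₁ := congrArg (f.coord 1) hs
  rw [map_smul, f.coord_one_smul_add, f.coord_one_smul_add, smul_eq_mul, mul_one] at hs₁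
  rw [← hs₁, one_smul] at hs
  simpa [f.coord_zero_smul_add] using congrArg (f.coord 0) hs

theorem exists_basis_eq_smul_and_eq_smul_add {c : A} (hc : IsUnit c) (y : A) :
    ∃ g : Basis (Fin 2) A N, g 0 = c • f 0 ∧ g 1 = y • f 0 + f 1 := by
  have h : f.coord 1 (y • f 0) = 0 := by simp
  refine ⟨(f.map (LinearEquiv.transvection h)).unitsSMul ![hc.unit, 1], ?_, ?_⟩ <;>
    simp [unitsSMul_apply, LinearMap.transvection.apply, add_comm]

theorem harm_affinePoint (y : A) {c : A} (hc : IsUnit c) :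
    Harm A N (span A {f 0}) (f.affinePoint y) (f.affinePoint (y + c))
      (f.affinePoint (y - c)) := by
  obtain ⟨g, hg₀, hg₁⟩ := f.exists_basis_eq_smul_and_eq_smul_add hc y
  refine ⟨g, ?_, by rw [hg₁]; rfl, ?_, ?_⟩
  · rw [hg₀, span_singleton_smul_eq hc]
  · rw [hg₀, hg₁, affinePoint, add_smul]
    congr 2
    abel
  · have : g 0 - g 1 = (-1 : A) • ((y - c) • f 0 + f 1) := by
      rw [hg₀, hg₁, neg_one_smul, sub_smul]
      abel
    rw [this, span_singleton_smul_eq isUnit_one.neg]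
    rfl

theorem exists_affinePoint_add_sub_of_harm (y : A) {q₂ q₃ : Submodule A N}
    (h : Harm A N (span A {f 0}) (f.affinePoint y) q₂ q₃) :
    ∃ d : A, q₂ = f.affinePoint (y + d) ∧ q₃ = f.affinePoint (y - d) := by
  obtain ⟨g, h₀, h₁, rfl, rfl⟩ := h
  obtain ⟨s, hs⟩ := exists_unit_smul_of_span_singleton_eq
    (g.linearIndependent.smul_left_injective 0) (f.linearIndependent.smul_left_injective 0)
    h₀.symm
  obtain ⟨t, ht⟩ := exists_unit_smul_of_span_singleton_eq
    (g.linearIndependent.smul_left_injective 1) (f.smul_left_injective_smul_add y) h₁.symm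
  refine ⟨↑t⁻¹ * s, ?_, ?_⟩
  · have : g 0 + g 1 = t • ((y + ↑t⁻¹ * s) • f 0 + f 1) := by
      simp only [hs, ht, Units.smul_def, smul_add, add_smul, smul_smul,
        Units.mul_inv_cancel_left]
      abel
    rw [this, span_singleton_group_smul_eq]
    rfl
  · have : g 0 - g 1 = (-t) • ((y - ↑t⁻¹ * s) • f 0 + f 1) := by
      simp only [hs, ht, Units.smul_def, Units.val_neg, smul_add, sub_smul, smul_sub, smul_smul,
        neg_mul, neg_smul, Units.mul_inv_cancel_left]
      abel
    rw [this, span_singleton_group_smul_eq]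
    rfl

end Module.Basis

section MidpointMaps
variable {A B : Type*} [Ring A] [Ring B]

def PreservesUnitMidpoints (β : A → B) : Prop :=
  ∀ y c : A, IsUnit c → β (y + c) + β (y - c) = β y + β y

variable {β : A → B}

/-- Translation by `h + h` is the reflection in `a` followed by the reflection in `a + h`. -/
theorem PreservesUnitMidpoints.map_add_add_sub_map (hβ : PreservesUnitMidpoints β) {a h q : A}
    (h₁ : IsUnit (a - q)) (h₂ : IsUnit (q + h - a)) :
    β (q + (h + h)) - β q = β (a + h) + β (a + h) - (β a + β a) := by
  have e₁ := hβ a (a - q) h₁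
  have e₂ := hβ (a + h) (q + h - a) h₂
  rw [sub_sub_cancel] at e₁
  rw [show a + h + (q + h - a) = q + (h + h) by abel,
    show a + h - (q + h - a) = a + (a - q) by abel] at e₂
  rw [← e₁, ← e₂]
  abel

theorem PreservesUnitMidpoints.map_add (hβ : PreservesUnitMidpoints β) (h2 : IsUnit (2 : A))
    (havoid : ∀ x₁ x₂ x₃ x₄ : A, ∃ a : A,
      IsUnit (a - x₁) ∧ IsUnit (a - x₂) ∧ IsUnit (a - x₃) ∧ IsUnit (a - x₄))
    (h0 : β 0 = 0) (x y : A) : β (x + y) = β x + β y := by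
  set h := Ring.inverse 2 * y
  have hh : h + h = y := by rw [← mul_add, ← two_mul, Ring.inverse_mul_cancel_left _ _ h2]
  obtain ⟨a, hx, hxh, ha, hah⟩ := havoid x (x + h) 0 h
  have tx := hβ.map_add_add_sub_map hx (by rw [← neg_sub]; exact hxh.neg)
  have t0 := hβ.map_add_add_sub_map ha (by rw [zero_add, ← neg_sub]; exact hah.neg)
  rw [hh] at tx t0
  rw [zero_add, h0, sub_zero] at t0
  rw [← t0] at tx
  exact sub_eq_iff_eq_add'.mp tx

theorem PreservesUnitMidpoints.two_mul_map_midpoint (hβ : PreservesUnitMidpoints β)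
    (h2 : IsUnit (2 : A)) {x y : A} (hxy : IsUnit (x - y)) :
    2 * β (Ring.inverse 2 * (x + y)) = β x + β y := by
  have e := hβ (Ring.inverse 2 * (x + y)) _ (h2.ringInverse.mul hxy)
  rw [← mul_add, ← mul_sub, show x + y + (x - y) = 2 * x by rw [two_mul]; abel,
    show x + y - (x - y) = 2 * y by rw [two_mul]; abel, Ring.inverse_mul_cancel_left _ _ h2,
    Ring.inverse_mul_cancel_left _ _ h2] at e
  rw [two_mul, e]

end MidpointMaps

section HarmonicityPreserver
variable {R M R' M' : Type*} [Ring R] [AddCommGroup M] [Module R M]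
  [Ring R'] [AddCommGroup M'] [Module R' M']
  {μ : Submodule R M → Submodule R' M'} {e : Basis (Fin 2) R M} {e' : Basis (Fin 2) R' M'}

variable (R M R' M') in
def PreservesHarm (μ : Submodule R M → Submodule R' M') : Prop :=
  ∀ p₀ p₁ p₂ p₃ : Submodule R M, Harm R M p₀ p₁ p₂ p₃ → Harm R' M' (μ p₀) (μ p₁) (μ p₂) (μ p₃)

theorem PreservesHarm.exists_map_affinePoint_add_sub (hμ : PreservesHarm R M R' M' μ)
    (he₀ : μ (span R {e 0}) = span R' {e' 0}) {y c : R} (hc : IsUnit c) {y' : R'}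
    (hy : μ (e.affinePoint y) = e'.affinePoint y') :
    ∃ d : R', μ (e.affinePoint (y + c)) = e'.affinePoint (y' + d) ∧
      μ (e.affinePoint (y - c)) = e'.affinePoint (y' - d) := by
  have h := hμ _ _ _ _ (e.harm_affinePoint y hc)
  rw [he₀, hy] at h
  exact e'.exists_affinePoint_add_sub_of_harm y' h

theorem PreservesHarm.exists_map_affinePoint_eq (hμ : PreservesHarm R M R' M' μ)
    (he₀ : μ (span R {e 0}) = span R' {e' 0}) (h0 : μ (e.affinePoint 0) = e'.affinePoint 0)
    (havoid : ∀ x₁ x₂ : R, ∃ c : R, IsUnit (c - x₁) ∧ IsUnit (c - x₂)) (x : R) :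
    ∃ x' : R', μ (e.affinePoint x) = e'.affinePoint x' := by
  obtain ⟨c, hc, hcx⟩ := havoid 0 x
  rw [sub_zero] at hc
  obtain ⟨d, hd, -⟩ := hμ.exists_map_affinePoint_add_sub he₀ hc h0
  rw [zero_add, zero_add] at hd
  obtain ⟨d', -, hd'⟩ := hμ.exists_map_affinePoint_add_sub he₀ hcx hd
  rw [sub_sub_cancel] at hd'
  exact ⟨_, hd'⟩

theorem PreservesHarm.preservesUnitMidpoints (hμ : PreservesHarm R M R' M' μ)
    (he₀ : μ (span R {e 0}) = span R' {e' 0}) {β : R → R'}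
    (hβ : ∀ x, μ (e.affinePoint x) = e'.affinePoint (β x)) : PreservesUnitMidpoints β := by
  intro y c hc
  obtain ⟨d, hplus, hminus⟩ := hμ.exists_map_affinePoint_add_sub he₀ hc (hβ y)
  rw [hβ] at hplus hminus
  rw [e'.affinePoint_injective hplus, e'.affinePoint_injective hminus]
  abel

end HarmonicityPreserver

theorem local_coordinate_representation_general
    (R M R' M' : Type*) [Ring R] [AddCommGroup M] [Module R M]
    [Ring R'] [AddCommGroup M'] [Module R' M']
    (hfive : ∀ x₁ x₂ x₃ x₄ x₅ : R, ∃ x : R, IsUnit (x - x₁) ∧ IsUnit (x - x₂) ∧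
      IsUnit (x - x₃) ∧ IsUnit (x - x₄) ∧ IsUnit (x - x₅))
    (h2 : IsUnit (2 : R))
    (e : Module.Basis (Fin 2) R M) (e' : Module.Basis (Fin 2) R' M')
    (μ : Submodule R M → Submodule R' M')
    (hμ : ∀ p₀ p₁ p₂ p₃ : Submodule R M,
      Harm R M p₀ p₁ p₂ p₃ → Harm R' M' (μ p₀) (μ p₁) (μ p₂) (μ p₃))
    (he₀ : μ (Submodule.span R {e 0}) = Submodule.span R' {e' 0})
    (he₁ : μ (Submodule.span R {e 1}) = Submodule.span R' {e' 1})
    (hplus : μ (Submodule.span R {e 0 + e 1}) = Submodule.span R' {e' 0 + e' 1}) :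
    ∃ β : R → R',
      (∀ x : R, μ (Submodule.span R {x • e 0 + e 1}) =
        Submodule.span R' {β x • e' 0 + e' 1}) ∧
      (∀ γ : R → R', (∀ x : R, μ (Submodule.span R {x • e 0 + e 1}) =
        Submodule.span R' {γ x • e' 0 + e' 1}) → γ = β) ∧
      (∀ x y : R, β (x + y) = β x + β y) ∧ β 1 = 1 ∧
      (∀ x y : R, IsUnit (x - y) →
        (2 : R') * β (Ring.inverse (2 : R) * (x + y)) = β x + β y) := by
  rw [← e.affinePoint_zero, ← e'.affinePoint_zero] at he₁
  rw [← e.affinePoint_one, ← e'.affinePoint_one] at hplus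
  choose β hβ using PreservesHarm.exists_map_affinePoint_eq hμ he₀ he₁
    fun x₁ x₂ => (hfive x₁ x₂ x₂ x₂ x₂).imp fun _ h => ⟨h.1, h.2.1⟩
  have hmid := PreservesHarm.preservesUnitMidpoints hμ he₀ hβ
  have hβ0 : β 0 = 0 := e'.affinePoint_injective ((hβ 0).symm.trans he₁)
  have havoid (x₁ x₂ x₃ x₄ : R) : ∃ a : R,
      IsUnit (a - x₁) ∧ IsUnit (a - x₂) ∧ IsUnit (a - x₃) ∧ IsUnit (a - x₄) :=
    (hfive x₁ x₂ x₃ x₄ x₄).imp fun _ h => ⟨h.1, h.2.1, h.2.2.1, h.2.2.2.1⟩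
  refine ⟨β, hβ, fun γ hγ => funext fun x => ?_, hmid.map_add h2 havoid hβ0,
    e'.affinePoint_injective ((hβ 1).symm.trans hplus), fun _ _ => hmid.two_mul_map_midpoint h2⟩
  exact e'.affinePoint_injective ((hγ x).symm.trans (hβ x))

/-- Lemma 2: under conditions (i) (five-element avoidance) and (ii) (`2 ∈ R*`),
a harmonicity preserver `μ` that matches the bases `(e₀,e₁)` and `(e₀',e₁')`
harmonically admits a unique local coordinate representation `β : R → R'` with
`μ(R(xe₀+e₁)) = R'(x^β e₀'+e₁')`; this `β` is additive, unital, and satisfies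
`((x+y)/2)^β = (x^β+y^β)/2` whenever `x - y ∈ R*`. -/
theorem local_coordinate_representation
    (R M R' M' : Type*) [Ring R] [AddCommGroup M] [Module R M]
    [Ring R'] [AddCommGroup M'] [Module R' M']
    (hfive : ∀ x₁ x₂ x₃ x₄ x₅ : R, ∃ x : R, IsUnit (x - x₁) ∧ IsUnit (x - x₂) ∧
      IsUnit (x - x₃) ∧ IsUnit (x - x₄) ∧ IsUnit (x - x₅))
    (h2 : IsUnit (2 : R))
    (e : Module.Basis (Fin 2) R M) (e' : Module.Basis (Fin 2) R' M')
    (μ : Submodule R M → Submodule R' M')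
    (hμ : ∀ p₀ p₁ p₂ p₃ : Submodule R M,
      Harm R M p₀ p₁ p₂ p₃ → Harm R' M' (μ p₀) (μ p₁) (μ p₂) (μ p₃))
    (he₀ : μ (Submodule.span R {e 0}) = Submodule.span R' {e' 0})
    (he₁ : μ (Submodule.span R {e 1}) = Submodule.span R' {e' 1})
    (hplus : μ (Submodule.span R {e 0 + e 1}) = Submodule.span R' {e' 0 + e' 1})
    (hminus : μ (Submodule.span R {e 0 - e 1}) = Submodule.span R' {e' 0 - e' 1}) :
    ∃ β : R → R',
      (∀ x : R, μ (Submodule.span R {x • e 0 + e 1}) =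
        Submodule.span R' {β x • e' 0 + e' 1}) ∧
      (∀ γ : R → R', (∀ x : R, μ (Submodule.span R {x • e 0 + e 1}) =
        Submodule.span R' {γ x • e' 0 + e' 1}) → γ = β) ∧
      (∀ x y : R, β (x + y) = β x + β y) ∧ β 1 = 1 ∧
      (∀ x y : R, IsUnit (x - y) →
        (2 : R') * β (Ring.inverse (2 : R) * (x + y)) = β x + β y) :=
  local_coordinate_representation_general R M R' M' hfive h2 e e' μ hμ he₀ he₁ hplus
end
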